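/- arXiv:1507.06581 — 4 statements merged into one kernel-verified Lean document; each statement's English description precedes it below -/
import Mathlib

section
/- For the symplectic group Sp(2n), let k and k' be nonnegative integers with k < k' and k'(k'+1) = 2n. Then the partition (2n − k(k+1) + 2k, 2(k−1), 2(k−2), ..., 4, 2) of 2n dominates the partition (2k', 2(k'−1), ..., 4, 2) of 2n. -/
/-- The partition `(2n − k(k+1) + 2k, 2(k−1), 2(k−2), ..., 4, 2)` of `2n`. -/
def inducedPartitionC (n k : ℕ) : List ℕ :=
  (2 * n - k * (k + 1) + 2 * k) :: (List.range (k - 1)).map (fun i => 2 * (k - 1 - i))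

/-- The partition `(2k', 2(k'−1), ..., 4, 2)`. -/
def cuspidalPartitionC (k' : ℕ) : List ℕ :=
  (List.range k').map (fun i => 2 * (k' - i))

lemma sum_map_range_aux (m : ℕ) :
    ∀ j, j ≤ m → ((List.range j).map (fun i => 2 * (m - i))).sum = j * (2 * m + 1) - j * j := by
  intro j
  induction j with
  | zero => simp
  | succ s ih =>
    intro h
    rw [List.range_succ, List.map_append, List.sum_append, ih (by omega)]
    simp only [List.map_cons, List.map_nil, List.sum_cons, List.sum_nil]
    have h1 : s * s ≤ s * (2 * m + 1) := Nat.mul_le_mul_left s (by omega)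
    have h2 : s ≤ m := by omega
    have h3 : (s + 1) * (s + 1) ≤ (s + 1) * (2 * m + 1) :=
      Nat.mul_le_mul_left (s + 1) (by omega)
    zify [h1, h2, h3]
    ring

lemma take_sum_le_sum (l : List ℕ) (j : ℕ) : (l.take j).sum ≤ l.sum := by
  conv_rhs => rw [← List.take_append_drop j l]
  rw [List.sum_append]
  exact Nat.le_add_right _ _

/-- For `Sp(2n)`: if `k < k'` and `k'(k'+1) = 2n`, then the partition
`(2n − k(k+1) + 2k, 2(k−1), ..., 4, 2)` of `2n` dominates `(2k', 2(k'−1), ..., 4, 2)`,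
where dominance is comparison of all partial sums. -/
theorem stmt3 (n k k' : ℕ) (hkk' : k < k') (hn : k' * (k' + 1) = 2 * n) :
    ∀ j : ℕ,
      ((cuspidalPartitionC k').take j).sum ≤ ((inducedPartitionC n k).take j).sum := by
  have hkle : k * (k + 1) ≤ 2 * n := by
    rw [← hn]; exact Nat.mul_le_mul (by omega) (by omega)
  -- total sum of cuspidal partition is 2n
  have hcusp_total : (cuspidalPartitionC k').sum = 2 * n := by
    unfold cuspidalPartitionC
    rw [sum_map_range_aux k' k' le_rfl]
    have : k' * k' ≤ k' * (2 * k' + 1) := Nat.mul_le_mul_left k' (by omega)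
    have hn' : (k' : ℤ) * (k' + 1) = 2 * n := by exact_mod_cast hn
    zify [this]
    nlinarith [hn']
  -- total sum of induced partition is 2n
  have hind_total : (inducedPartitionC n k).sum = 2 * n := by
    unfold inducedPartitionC
    rw [List.sum_cons, sum_map_range_aux (k - 1) (k - 1) le_rfl]
    rcases Nat.eq_zero_or_pos k with hk | hk
    · subst hk; simp
    · have h1 : (k - 1) * (k - 1) ≤ (k - 1) * (2 * (k - 1) + 1) :=
        Nat.mul_le_mul_left _ (by omega)
      zify [h1, hkle, hk]
      ring
  intro j
  rcases Nat.eq_zero_or_pos j with rfl | hj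
  · simp
  rcases le_or_gt j k with hjk | hjk
  · -- case 1 ≤ j ≤ k
    obtain ⟨s, rfl⟩ : ∃ s, j = s + 1 := ⟨j - 1, by omega⟩
    have hjk' : s + 1 ≤ k' := by omega
    -- cuspidal side
    have hc : ((cuspidalPartitionC k').take (s + 1)).sum
        = (s + 1) * (2 * k' + 1) - (s + 1) * (s + 1) := by
      unfold cuspidalPartitionC
      rw [← List.map_take, List.take_range, min_eq_left hjk',
        sum_map_range_aux k' (s + 1) hjk']
    -- induced side
    have hsk : s ≤ k - 1 := by omega
    have hi : ((inducedPartitionC n k).take (s + 1)).sum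
        = (2 * n - k * (k + 1) + 2 * k) + (s * (2 * (k - 1) + 1) - s * s) := by
      unfold inducedPartitionC
      rw [List.take_succ_cons, List.sum_cons, ← List.map_take, List.take_range,
        min_eq_left hsk, sum_map_range_aux (k - 1) s hsk]
    rw [hc, hi]
    have h1 : (s + 1) * (s + 1) ≤ (s + 1) * (2 * k' + 1) :=
      Nat.mul_le_mul_left _ (by omega)
    have h2 : s * s ≤ s * (2 * (k - 1) + 1) := Nat.mul_le_mul_left _ (by omega)
    have hk1 : 1 ≤ k := by omega
    zify [h1, h2, hkle, hk1]
    have hn' : (k' : ℤ) * (k' + 1) = 2 * n := by exact_mod_cast hn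
    have hd1 : (0 : ℤ) ≤ (k' : ℤ) - k := by
      have : (k : ℤ) < k' := by exact_mod_cast hkk'
      omega
    have hd2 : (0 : ℤ) ≤ (k' : ℤ) + k + 1 - 2 * (s + 1) := by
      have h3 : (s : ℤ) + 1 ≤ k := by exact_mod_cast hjk
      have h4 : (k : ℤ) ≤ k' := by
        have : (k : ℤ) < k' := by exact_mod_cast hkk'
        omega
      omega
    nlinarith [mul_nonneg hd1 hd2]
  · -- case j > k : induced take j is the whole list
    have hlen : (inducedPartitionC n k).length ≤ j := by
      unfold inducedPartitionC
      simp only [List.length_cons, List.length_map, List.length_range]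
      omega
    rw [List.take_of_length_le hlen, hind_total]
    calc ((cuspidalPartitionC k').take j).sum ≤ (cuspidalPartitionC k').sum :=
          take_sum_le_sum _ _
      _ = 2 * n := hcusp_total
end

section
/- Let A be an abelian category, Z a group acting on each object X of A via homomorphisms φ^X : Z → Aut(X) natural in X, and let χ : Z → kˣ be a character (where A is k-linear). Suppose F and G are objects on which each z ∈ Z acts by the scalar χ(z), and suppose 0 → F → H → G → 0 is a short exact sequence in A. If for each z ∈ Z, the order of z is invertible in End(H), then each z ∈ Z acts on H by the scalar χ(z). -/
open CategoryTheory

/-- Let `A` be a `k`-linear abelian category, `Z` a group acting on each object `X` via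
homomorphisms `φ X : Z →* Aut X`, naturally in `X`, and `χ : Z → kˣ` a character. If `F` and
`G` are objects on which each `z ∈ Z` acts by the scalar `χ z`, `0 → F → H → G → 0` is a short
exact sequence, and for each `z ∈ Z` the order of `z` is invertible in `End H`, then each
`z ∈ Z` acts on `H` by the scalar `χ z`. -/
theorem stmt6 (k : Type) [Field k] (C : Type) [Category C] [Abelian C]
    [CategoryTheory.Linear k C]
    (Z : Type) [Group Z] (φ : ∀ X : C, Z →* Aut X)
    (hnat : ∀ (X Y : C) (f : X ⟶ Y) (z : Z), (φ X z).hom ≫ f = f ≫ (φ Y z).hom)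
    (χ : Z →* kˣ) (F G H : C) (f : F ⟶ H) (g : H ⟶ G) (hfg : f ≫ g = 0)
    (hses : (ShortComplex.mk f g hfg).ShortExact)
    (hF : ∀ z : Z, (φ F z).hom = (χ z : k) • 𝟙 F)
    (hG : ∀ z : Z, (φ G z).hom = (χ z : k) • 𝟙 G)
    (hord : ∀ z : Z, IsUnit ((orderOf z : ℕ) : End H)) :
    ∀ z : Z, (φ H z).hom = (χ z : k) • 𝟙 H := by
  have hmono : Mono (ShortComplex.mk f g hfg).f := hses.mono_f
  set Φ : Z → (H ⟶ H) := fun w => (((χ w)⁻¹ : kˣ) : k) • (φ H w).hom - 𝟙 H with hΦ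
  have hg0 : ∀ w, Φ w ≫ g = 0 := by
    intro w
    have h1 : (φ H w).hom ≫ g = (χ w : k) • g := by
      rw [hnat, hG, Linear.comp_smul, Category.comp_id]
    simp [hΦ, Preadditive.sub_comp, Linear.smul_comp, h1, smul_smul,
      Units.inv_mul]
  have hf0 : ∀ w, f ≫ Φ w = 0 := by
    intro w
    have h1 : f ≫ (φ H w).hom = (χ w : k) • f := by
      rw [← hnat, hF, Linear.smul_comp, Category.id_comp]
    simp [hΦ, Preadditive.comp_sub, Linear.comp_smul, h1, smul_smul,
      Units.inv_mul]
  have hcomp : ∀ w w', Φ w ≫ Φ w' = 0 := by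
    intro w w'
    have := hses.exact.lift_f (Φ w) (hg0 w)
    rw [← this, Category.assoc]
    change _ ≫ f ≫ Φ w' = 0
    rw [hf0, Limits.comp_zero]
  have hadd : ∀ w w', Φ (w * w') = Φ w + Φ w' := by
    intro w w'
    have hmul : (φ H (w * w')).hom = (φ H w').hom ≫ (φ H w).hom := by
      rw [map_mul]; rfl
    have hχ : (((χ (w * w'))⁻¹ : kˣ) : k)
        = (((χ w')⁻¹ : kˣ) : k) * (((χ w)⁻¹ : kˣ) : k) := by
      rw [map_mul, mul_inv, Units.val_mul]; ring
    have key : Φ w' ≫ Φ w = Φ (w * w') - Φ w - Φ w' := by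
      rw [hΦ]
      simp only [Preadditive.sub_comp, Preadditive.comp_sub, Linear.smul_comp,
        Linear.comp_smul, Category.id_comp, Category.comp_id, hmul, hχ, smul_sub,
        smul_smul]
      rw [mul_comm ((((χ w)⁻¹ : kˣ) : k)) ((((χ w')⁻¹ : kˣ) : k))]
      abel
    have h0 : Φ (w * w') - Φ w - Φ w' = 0 := by rw [← key, hcomp]
    exact sub_eq_zero.mp (by rwa [sub_sub] at h0)
  have hpow : ∀ (z : Z) (n : ℕ), Φ (z ^ n) = n • Φ z := by
    intro z n
    induction n with
    | zero =>
        simp only [pow_zero, hΦ, map_one, Units.val_one, inv_one, one_smul, zero_smul]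
        show (Iso.refl H).hom - 𝟙 H = 0
        simp
    | succ n ih => rw [pow_succ, hadd, ih, succ_nsmul]
  intro z
  have h1 : (orderOf z : ℕ) • Φ z = 0 := by
    rw [← hpow, pow_orderOf_eq_one]
    simp only [hΦ, map_one, Units.val_one, inv_one, one_smul]
    show (Iso.refl H).hom - 𝟙 H = 0
    simp
  have h2 : ((orderOf z : ℕ) : End H) * (show End H from Φ z) = 0 := by
    rw [← nsmul_eq_mul]; exact h1
  have h3 : Φ z = 0 := (hord z).mul_left_cancel (by rw [h2, mul_zero])
  have h4 := sub_eq_zero.mp h3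
  calc (φ H z).hom = (χ z : k) • ((((χ z)⁻¹ : kˣ) : k) • (φ H z).hom) := by
        rw [smul_smul, Units.mul_inv, one_smul]
    _ = (χ z : k) • 𝟙 H := by rw [h4]
end

section
/- Let n be a positive integer and ℓ a prime. Then the number of bipartitions of n equals the sum, over partitions ν of n all of whose parts are powers of ℓ, of the number of tuples of ℓ-regular bipartitions of the multiplicity type m(ν), where for ν with distinct part sizes ℓ^{a_1},...,ℓ^{a_r} occurring with multiplicities m_1,...,m_r, the count is the product over i of the number of pairs (λ,μ) of ℓ-regular partitions with |λ|+|μ| = m_i. -/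
/-!
Expand the multiplicity function `f` of a bipartition of `n` in base `ℓ`: `f = ∑ₐ ℓ ^ a • Dₐ`
with every value of every layer `Dₐ` below `ℓ`. Each layer `Dₐ` is an `ℓ`-regular bipartition, of
size `mₐ` say, and `n = ∑ₐ ℓ ^ a * mₐ`, so the `mₐ` are the multiplicities of a partition `ν` of
`n` into powers of `ℓ`. Conversely, `ν` together with an `ℓ`-regular bipartition of each
multiplicity `mₐ` determines `f`.
-/

/-- The number of bipartitions of `n`: pairs of partitions `(λ, μ)` with `|λ| + |μ| = n`. -/
noncomputable def numBipart (n : ℕ) : ℕ :=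
  ∑ a ∈ Finset.range (n + 1), Nat.card (Nat.Partition a) * Nat.card (Nat.Partition (n - a))

/-- The number of pairs `(λ, μ)` of `ℓ`-regular partitions (no part repeated `ℓ` or more times)
with `|λ| + |μ| = m`. -/
noncomputable def numRegularBipart (ℓ m : ℕ) : ℕ :=
  ∑ a ∈ Finset.range (m + 1),
    Nat.card {p : Nat.Partition a // ∀ i : ℕ, p.parts.count i < ℓ} *
      Nat.card {p : Nat.Partition (m - a) // ∀ i : ℕ, p.parts.count i < ℓ}

open Finset Finsupp

namespace Nat

theorem sum_range_pow_mul_div_pow_mod {ℓ N k : ℕ} (hk : k < ℓ ^ N) :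
    ∑ i ∈ range N, ℓ ^ i * (k / ℓ ^ i % ℓ) = k := by
  have := congrArg Fin.val (finFunctionFinEquiv.apply_symm_apply (⟨k, hk⟩ : Fin (ℓ ^ N)))
  simp only [finFunctionFinEquiv_apply, finFunctionFinEquiv_symm_apply_val] at this
  rw [← Fin.sum_univ_eq_sum_range (fun i => ℓ ^ i * (k / ℓ ^ i % ℓ))]
  simpa only [mul_comm] using this

theorem div_pow_mod_sum_range_pow_mul {ℓ N a : ℕ} {c : ℕ → ℕ} (hc : ∀ i, c i < ℓ) (ha : a < N) :
    (∑ i ∈ range N, ℓ ^ i * c i) / ℓ ^ a % ℓ = c a := by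
  have := congrArg (fun d => (d ⟨a, ha⟩ : ℕ))
    (finFunctionFinEquiv.symm_apply_apply (fun i : Fin N => (⟨c i, hc i⟩ : Fin ℓ)))
  simp only [finFunctionFinEquiv_symm_apply_val, finFunctionFinEquiv_apply] at this
  rw [← Fin.sum_univ_eq_sum_range (fun i => ℓ ^ i * c i)]
  simpa only [mul_comm] using this

theorem card_eq_sum_card_fiber {α β : Type*} [Fintype β] (f : α → β)
    [∀ b, Finite {a // f a = b}] : Nat.card α = ∑ b, Nat.card {a // f a = b} := by
  rw [← Nat.card_sigma, Nat.card_congr (Equiv.sigmaFiberEquiv f)]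

end Nat

namespace Finsupp

section Digits

variable {X : Type*} {ℓ : ℕ}

noncomputable def ofDigits (ℓ : ℕ) (D : ℕ →₀ X →₀ ℕ) : X →₀ ℕ := D.sum fun a g => ℓ ^ a • g

theorem ofDigits_apply (D : ℕ →₀ X →₀ ℕ) (x : X) :
    ofDigits ℓ D x = D.sum fun a g => ℓ ^ a * g x := by
  simp [ofDigits, Finsupp.sum_apply]

theorem weight_ofDigits (s : X → ℕ) (D : ℕ →₀ X →₀ ℕ) :
    weight s (ofDigits ℓ D) = weight (ℓ ^ ·) (D.mapRange (weight s) (map_zero _)) := by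
  rw [ofDigits, map_finsuppSum, weight_apply,
    sum_mapRange_index (h := fun a c => c • ℓ ^ a) (fun _ => zero_smul _ _)]
  simp only [map_nsmul, smul_eq_mul, mul_comm]

noncomputable def digitsEquiv (hℓ : 2 ≤ ℓ) :
    (X →₀ ℕ) ≃ {D : ℕ →₀ X →₀ ℕ // ∀ a x, D a x < ℓ} where
  toFun f := ⟨onFinset (range f.degree) (fun a => f.mapRange (· / ℓ ^ a % ℓ) (by simp))
      fun a ha => by
        obtain ⟨x, hx⟩ := Finsupp.ne_iff.mp ha
        have : ℓ ^ a ≤ f x := by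
          by_contra h
          simp [Nat.div_eq_of_lt (not_le.mp h)] at hx
        exact mem_range.mpr ((Nat.lt_pow_self hℓ).trans_le (this.trans (le_degree x f))),
    fun a x => Nat.mod_lt _ (by omega)⟩
  invFun D := ofDigits ℓ D.1
  left_inv f := by
    ext x
    rw [ofDigits_apply, sum_of_support_subset _ support_onFinset_subset _ (by simp)]
    exact Nat.sum_range_pow_mul_div_pow_mod ((le_degree x f).trans_lt (Nat.lt_pow_self hℓ))
  right_inv D := by
    ext a x
    obtain ⟨N, hN, ha⟩ : ∃ N, D.1.support ⊆ range N ∧ a < N :=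
      ⟨D.1.support.sup id + a + 1, fun i hi => mem_range.mpr
        (Nat.lt_succ_of_le ((le_sup (f := id) hi).trans (Nat.le_add_right _ _))), by omega⟩
    simp only [onFinset_apply, mapRange_apply, ofDigits_apply]
    rw [sum_of_support_subset _ hN _ (by simp)]
    exact Nat.div_pow_mod_sum_range_pow_mul (fun i => D.2 i x) ha

theorem ofDigits_digitsEquiv (hℓ : 2 ≤ ℓ) (f : X →₀ ℕ) :
    ofDigits ℓ (digitsEquiv hℓ f).1 = f :=
  (digitsEquiv hℓ).symm_apply_apply f

end Digits

section Multiplicities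

variable {L : Type*} {ι : L → ℕ}

theorem sum_map_toMultiset (m : L →₀ ℕ) : ((toMultiset m).map ι).sum = weight ι m := by
  induction m using Finsupp.induction_linear with
  | zero => simp
  | add f g hf hg => simp [hf, hg]
  | single x k => simp [Multiset.map_nsmul, Multiset.sum_nsmul, weight_single]

theorem map_toMultiset_comapDomain_toFinsupp (hι : Function.Injective ι) {s : Multiset ℕ}
    (hs : ∀ i ∈ s, ∃ x, i = ι x) :
    (toMultiset ((Multiset.toFinsupp s).comapDomain ι hι.injOn)).map ι = s := by
  classical
  ext i
  by_cases hi : ∃ x, i = ι x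
  · obtain ⟨x, rfl⟩ := hi
    rw [Multiset.count_map_eq_count' _ _ hι, count_toMultiset, comapDomain_apply,
      Multiset.toFinsupp_apply]
  · refine (Multiset.count_eq_zero.mpr fun h => ?_).trans
      (Multiset.count_eq_zero.mpr fun h => hi (hs i h)).symm
    obtain ⟨x, -, hx⟩ := Multiset.mem_map.mp h
    exact hi ⟨x, hx.symm⟩

end Multiplicities

section Layers

variable {ι M Y : Type*} [Zero M] [Zero Y]

noncomputable def equivPiSupport (T : M → Set Y) (hT : T 0 = {0}) (m : ι →₀ M) :
    {D : ι →₀ Y // ∀ a, D a ∈ T (m a)} ≃ ((a : m.support) → T (m a)) where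
  toFun D a := ⟨D.1 a, D.2 a⟩
  invFun F := by
    classical
    exact ⟨onFinset m.support (fun a => if h : a ∈ m.support then F ⟨a, h⟩ else 0) fun a ha => by
        by_contra h
        exact ha (dif_neg h), fun a => by
      by_cases h : a ∈ m.support
      · rw [onFinset_apply, dif_pos h]
        exact (F ⟨a, h⟩).2
      · rw [onFinset_apply, dif_neg h, notMem_support_iff.mp h, hT]
        rfl⟩
  left_inv D := by
    ext a
    by_cases h : a ∈ m.support
    · simp [h]
    · have := D.2 a
      simp_all [notMem_support_iff.mp h]
  right_inv F := by
    funext a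
    simp [a.2]

theorem card_subtype_forall_mem (T : M → Set Y) (hT : T 0 = {0}) (m : ι →₀ M) :
    Nat.card {D : ι →₀ Y // ∀ a, D a ∈ T (m a)} = m.prod fun _ k => Nat.card (T k) := by
  rw [Nat.card_congr (equivPiSupport T hT m), Nat.card_pi, Finsupp.prod,
    ← prod_coe_sort m.support]

end Layers

end Finsupp

namespace Nat.Partition

variable {L : Type*} {ι : L → ℕ} (hι : Function.Injective ι) (hι0 : ∀ x, ι x ≠ 0)

noncomputable def multiplicityEquiv (n : ℕ) :
    {p : n.Partition // ∀ i ∈ p.parts, ∃ x, i = ι x} ≃ {m : L →₀ ℕ // weight ι m = n} where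
  toFun p := ⟨(Multiset.toFinsupp p.1.parts).comapDomain ι hι.injOn, by
    rw [← sum_map_toMultiset, map_toMultiset_comapDomain_toFinsupp hι p.2, p.1.parts_sum]⟩
  invFun m := ⟨⟨(toMultiset m.1).map ι, fun hi => by
      obtain ⟨x, -, rfl⟩ := Multiset.mem_map.mp hi
      exact Nat.pos_of_ne_zero (hι0 x), by rw [sum_map_toMultiset, m.2]⟩, fun i hi => by
      obtain ⟨x, -, rfl⟩ := Multiset.mem_map.mp hi
      exact ⟨x, rfl⟩⟩
  left_inv p := Subtype.ext (Nat.Partition.ext (map_toMultiset_comapDomain_toFinsupp hι p.2))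
  right_inv m := by
    classical
    ext x
    simp [Multiset.count_map_eq_count' _ _ hι]

theorem multiplicityEquiv_apply (n : ℕ) (p) (x : L) :
    (multiplicityEquiv hι hι0 n p : L →₀ ℕ) x = p.1.parts.count (ι x) := by
  classical
  simp [multiplicityEquiv]

theorem prod_multiplicityEquiv {M : Type*} [CommMonoid M] (g : ℕ → M) (n : ℕ) (p) :
    (multiplicityEquiv hι hι0 n p : L →₀ ℕ).prod (fun _ k => g k) =
      ∏ i ∈ p.1.parts.toFinset, g (p.1.parts.count i) := by
  refine Finset.prod_nbij ι (fun x hx => ?_) hι.injOn (fun i hi => ?_) (fun x _ => ?_)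
  · simpa [multiplicityEquiv_apply, Multiset.count_eq_zero] using hx
  · obtain ⟨x, rfl⟩ := p.2 i (Multiset.mem_toFinset.mp hi)
    exact ⟨x, by simpa [multiplicityEquiv_apply, Multiset.count_eq_zero] using hi, rfl⟩
  · rw [multiplicityEquiv_apply]

noncomputable def equivPNatFinsupp (R : ℕ → Prop) (hR : R 0) (n : ℕ) :
    {p : n.Partition // ∀ i, R (p.parts.count i)} ≃
      {g : ℕ+ →₀ ℕ // (∀ x, R (g x)) ∧ weight PNat.val g = n} :=
  let e := (Equiv.subtypeUnivEquiv fun p i hi => ⟨⟨i, p.parts_pos hi⟩, rfl⟩).symm.trans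
    (multiplicityEquiv PNat.coe_injective PNat.ne_zero n)
  have he (p : n.Partition) (x : ℕ+) : (e p : ℕ+ →₀ ℕ) x = p.parts.count (x : ℕ) :=
    multiplicityEquiv_apply PNat.coe_injective PNat.ne_zero n _ x
  (e.subtypeEquiv (q := fun m => ∀ x, R (m.1 x)) fun p => by
      refine ⟨fun h x => he p x ▸ h x, fun h i => ?_⟩
      rcases Nat.eq_zero_or_pos i with rfl | hi
      · rwa [Multiset.count_eq_zero.mpr fun h0 => (p.parts_pos h0).false]
      · exact he p ⟨i, hi⟩ ▸ h ⟨i, hi⟩).trans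
    ((Equiv.subtypeSubtypeEquivSubtypeInter (fun m : ℕ+ →₀ ℕ => weight PNat.val m = n)
      (fun m => ∀ x, R (m x))).trans (Equiv.subtypeEquivRight fun _ => and_comm))

end Nat.Partition

namespace Finsupp

variable {X : Type*} {ℓ : ℕ}

/-- For `X = ℕ+ ⊕ ℕ+` and `s` the part size, these are the `ℓ`-regular bipartitions of `k`. -/
def regularOfWeight (ℓ : ℕ) (s : X → ℕ) (k : ℕ) : Set (X →₀ ℕ) :=
  {y | (∀ x, y x < ℓ) ∧ weight s y = k}

theorem regularOfWeight_zero (hℓ : 0 < ℓ) {s : X → ℕ} (hs : ∀ x, s x ≠ 0) :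
    regularOfWeight ℓ s 0 = {0} := by
  ext y
  refine ⟨fun hy => ?_, fun hy => ⟨fun x => by simp [Set.mem_singleton_iff.mp hy, hℓ], by
    simp [Set.mem_singleton_iff.mp hy]⟩⟩
  ext x
  exact Nat.eq_zero_of_le_zero ((le_weight s (hs x) y).trans hy.2.le)

theorem finite_regularOfWeight {s : X → ℕ} [∀ k, Finite {f : X →₀ ℕ // weight s f = k}]
    (k : ℕ) : (regularOfWeight ℓ s k).Finite :=
  (Set.finite_coe_iff.mp (inferInstanceAs (Finite {f : X →₀ ℕ // weight s f = k}))).subset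
    fun _ hy => hy.2

open scoped Classical in
theorem card_weight_eq_sum_prod_card_regularOfWeight (hℓ : 2 ≤ ℓ) (s : X → ℕ)
    (hs : ∀ x, s x ≠ 0) [∀ k, Finite {f : X →₀ ℕ // weight s f = k}] (n : ℕ) :
    Nat.card {f : X →₀ ℕ // weight s f = n} =
      ∑ ν ∈ univ.filter (fun ν : n.Partition => ∀ i ∈ ν.parts, ∃ a : ℕ, i = ℓ ^ a),
        ∏ i ∈ ν.parts.toFinset, Nat.card (regularOfWeight ℓ s (ν.parts.count i)) := by
  let e := Nat.Partition.multiplicityEquiv (Nat.pow_right_injective hℓ)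
    (fun a => pow_ne_zero a (by omega)) n
  let Digits := {D : {D : ℕ →₀ X →₀ ℕ // ∀ a x, D a x < ℓ} //
    weight (ℓ ^ ·) (D.1.mapRange (weight s) (map_zero _)) = n}
  have digits : {f : X →₀ ℕ // weight s f = n} ≃ Digits :=
    (digitsEquiv hℓ).subtypeEquiv fun f => by
      rw [← weight_ofDigits, ofDigits_digitsEquiv]
  let F (D : Digits) := e.symm ⟨_, D.2⟩
  have fiber (ν) : {D // F D = ν} ≃
      {D : ℕ →₀ X →₀ ℕ // ∀ a, D a ∈ regularOfWeight ℓ s ((e ν : ℕ →₀ ℕ) a)} := by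
    have key (D : ℕ →₀ X →₀ ℕ) (hD) :
        e.symm ⟨D.mapRange (weight s) (map_zero _), hD⟩ = ν ↔
          ∀ a, weight s (D a) = (e ν : ℕ →₀ ℕ) a := by
      rw [Equiv.symm_apply_eq, Subtype.ext_iff, Finsupp.ext_iff]
      rfl
    exact {
      toFun D := ⟨D.1.1.1, fun a => ⟨D.1.1.2 a, (key _ _).mp D.2 a⟩⟩
      invFun D := ⟨⟨⟨D.1, fun a => (D.2 a).1⟩, by
          convert (e ν).2
          ext a
          exact (D.2 a).2⟩, (key _ _).mpr fun a => (D.2 a).2⟩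
      left_inv _ := rfl
      right_inv _ := rfl }
  have _ (ν) : Finite {D // F D = ν} :=
    have _ (k) : Finite (regularOfWeight ℓ s k) := (finite_regularOfWeight k).to_subtype
    .of_equiv _ ((fiber ν).trans (equivPiSupport _ (regularOfWeight_zero (by omega) hs) _)).symm
  rw [Nat.card_congr digits, Nat.card_eq_sum_card_fiber F,
    Finset.sum_subtype (p := fun ν : n.Partition => ∀ i ∈ ν.parts, ∃ a : ℕ, i = ℓ ^ a) _
      fun _ => by simp]
  refine Finset.sum_congr rfl fun ν _ => ?_
  rw [Nat.card_congr (fiber ν), card_subtype_forall_mem _ (regularOfWeight_zero (by omega) hs),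
    Nat.Partition.prod_multiplicityEquiv]

theorem weight_sumElim {Y : Type*} (s : X → ℕ) (t : Y → ℕ) (f : X ⊕ Y →₀ ℕ) :
    weight (Sum.elim s t) f =
      weight s (sumFinsuppEquivProdFinsupp f).1 + weight t (sumFinsuppEquivProdFinsupp f).2 := by
  change _ = weight s (sumFinsuppAddEquivProdFinsupp f).1 +
    weight t (sumFinsuppAddEquivProdFinsupp f).2
  induction f using Finsupp.induction_linear with
  | zero => simp
  | add f g hf hg => simp only [map_add, Prod.fst_add, Prod.snd_add, hf, hg]; ring
  | single z k =>
    cases z <;> simp [sumFinsuppAddEquivProdFinsupp, sumFinsuppEquivProdFinsupp, weight_single]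

end Finsupp

def prodWeightEquivSigmaAntidiagonal {A B : Type*} (P : A → Prop) (Q : B → Prop)
    (wA : A → ℕ) (wB : B → ℕ) (n : ℕ) :
    {q : A × B // (P q.1 ∧ Q q.2) ∧ wA q.1 + wB q.2 = n} ≃
      Σ kl : antidiagonal n, {a // P a ∧ wA a = kl.1.1} × {b // Q b ∧ wB b = kl.1.2} where
  toFun q := ⟨⟨(wA q.1.1, wB q.1.2), mem_antidiagonal.mpr q.2.2⟩,
    ⟨q.1.1, q.2.1.1, rfl⟩, ⟨q.1.2, q.2.1.2, rfl⟩⟩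
  invFun x := ⟨(x.2.1.1, x.2.2.1), ⟨x.2.1.2.1, x.2.2.2.1⟩, by
    rw [x.2.1.2.2, x.2.2.2.2]
    exact mem_antidiagonal.mp x.1.2⟩
  left_inv _ := rfl
  right_inv := by
    rintro ⟨⟨⟨k, l⟩, h⟩, ⟨a, ha, hak⟩, ⟨b, hb, hbl⟩⟩
    dsimp only at hak hbl
    subst hak hbl
    rfl

/-- A bipartition is recorded by its multiplicity function on two copies of `ℕ+`. -/
noncomputable def bipartitionEquiv (R : ℕ → Prop) (hR : R 0) (n : ℕ) :
    {f : ℕ+ ⊕ ℕ+ →₀ ℕ // (∀ z, R (f z)) ∧ weight (Sum.elim PNat.val PNat.val) f = n} ≃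
      Σ kl : antidiagonal n, {p : kl.1.1.Partition // ∀ i, R (p.parts.count i)} ×
        {p : kl.1.2.Partition // ∀ i, R (p.parts.count i)} :=
  (sumFinsuppEquivProdFinsupp.subtypeEquiv fun f => by
      rw [weight_sumElim, Sum.forall]
      rfl).trans <|
    (prodWeightEquivSigmaAntidiagonal (fun g : ℕ+ →₀ ℕ => ∀ x, R (g x))
      (fun g : ℕ+ →₀ ℕ => ∀ x, R (g x)) _ _ n).trans <|
    Equiv.sigmaCongrRight fun _ =>
      (Nat.Partition.equivPNatFinsupp R hR _).symm.prodCongr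
        (Nat.Partition.equivPNatFinsupp R hR _).symm

theorem card_bipartition (R : ℕ → Prop) (hR : R 0) (n : ℕ) :
    Nat.card {f : ℕ+ ⊕ ℕ+ →₀ ℕ // (∀ z, R (f z)) ∧ weight (Sum.elim PNat.val PNat.val) f = n} =
      ∑ a ∈ range (n + 1), Nat.card {p : a.Partition // ∀ i, R (p.parts.count i)} *
        Nat.card {p : (n - a).Partition // ∀ i, R (p.parts.count i)} := by
  rw [Nat.card_congr (bipartitionEquiv R hR n), Nat.card_sigma,
    ← Finset.Nat.sum_antidiagonal_eq_sum_range_succ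
      (fun a b => Nat.card {p : a.Partition // ∀ i, R (p.parts.count i)} *
        Nat.card {p : b.Partition // ∀ i, R (p.parts.count i)})]
  simp only [Nat.card_prod]
  exact Finset.sum_coe_sort (antidiagonal n) fun ij : ℕ × ℕ =>
    Nat.card {p : ij.1.Partition // ∀ i, R (p.parts.count i)} *
      Nat.card {p : ij.2.Partition // ∀ i, R (p.parts.count i)}

open scoped Classical in
theorem stmt10_general (n ℓ : ℕ) (hℓ : ℓ.Prime) :
    numBipart n =
      ∑ ν ∈ Finset.univ.filter
          (fun ν : Nat.Partition n => ∀ i ∈ ν.parts, ∃ a : ℕ, i = ℓ ^ a),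
        ∏ i ∈ ν.parts.toFinset, numRegularBipart ℓ (ν.parts.count i) := by
  have _ (k) : Finite {f : ℕ+ ⊕ ℕ+ →₀ ℕ // weight (Sum.elim PNat.val PNat.val) f = k} :=
    .of_equiv _ ((Equiv.subtypeEquivRight fun f => by simp).trans
      (bipartitionEquiv (fun _ => True) trivial k)).symm
  have hBipart : numBipart n =
      Nat.card {f : ℕ+ ⊕ ℕ+ →₀ ℕ // weight (Sum.elim PNat.val PNat.val) f = n} := by
    simpa [numBipart] using (card_bipartition (fun _ => True) trivial n).symm
  have hRegular (m : ℕ) : numRegularBipart ℓ m =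
      Nat.card (regularOfWeight ℓ (Sum.elim PNat.val PNat.val) m) :=
    (card_bipartition (· < ℓ) hℓ.pos m).symm
  simp only [hBipart, hRegular]
  exact card_weight_eq_sum_prod_card_regularOfWeight hℓ.two_le _
    (Sum.forall.mpr ⟨PNat.ne_zero, PNat.ne_zero⟩) n

open scoped Classical in
/-- For `n` positive and `ℓ` prime, the number of bipartitions of `n` equals the sum, over
partitions `ν` of `n` all of whose parts are powers of `ℓ`, of the product over the distinct
parts `i` of `ν` of the number of `ℓ`-regular bipartitions of the multiplicity of `i` in `ν`. -/
theorem stmt10 (n ℓ : ℕ) (hn : 0 < n) (hℓ : ℓ.Prime) :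
    numBipart n =
      ∑ ν ∈ Finset.univ.filter
          (fun ν : Nat.Partition n => ∀ i ∈ ν.parts, ∃ a : ℕ, i = ℓ ^ a),
        ∏ i ∈ ν.parts.toFinset, numRegularBipart ℓ (ν.parts.count i) :=
  stmt10_general n ℓ hℓ
end

section
/- Let X be a finite set, I a finite partially ordered set, and f, g : X → I functions such that f(x) ⪯ g(x) for all x ∈ X, and such that for every i ∈ I the fibers satisfy |f⁻¹({j : j ⪰ i})| = |g⁻¹({j : j ⪰ i})|. Then f = g. -/
/-- If `X` is a finite set, `I` a finite poset, and `f g : X → I` satisfy `f x ⪯ g x` for all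
`x ∈ X`, and for every `i ∈ I` the preimages of the up-set `{j : j ⪰ i}` under `f` and `g` have
the same cardinality, then `f = g`. -/
theorem stmt12 (X I : Type) [Finite X] [Finite I] [PartialOrder I]
    (f g : X → I) (hle : ∀ x : X, f x ≤ g x)
    (hcard : ∀ i : I, Nat.card {x : X // i ≤ f x} = Nat.card {x : X // i ≤ g x}) :
    f = g := by
  funext x
  refine le_antisymm (hle x) ?_
  have key : {y : X | g x ≤ f y} = {y : X | g x ≤ g y} := by
    apply Set.eq_of_subset_of_ncard_le
    · intro y hy
      exact le_trans hy (hle y)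
    · simp only [← Nat.card_coe_set_eq, Set.coe_setOf]
      exact le_of_eq (hcard (g x)).symm
    · exact Set.toFinite _
  have : x ∈ {y : X | g x ≤ g y} := le_refl _
  rw [← key] at this
  exact this
end
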